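/- A matrix A ∈ SU(2m) with columns v₁, …, v_{2m} satisfies AᵗJA = J (i.e., A ∈ Sp(m)) if and only if v_{2k} = J·conj(v_{2k−1}) for all k = 1, …, m, where J is the block-diagonal 2m×2m matrix with diagonal 2×2 blocks [[0,−1],[1,0]]. -/

import Mathlib

/-- The 2m×2m block-diagonal matrix with diagonal 2×2 blocks [[0,−1],[1,0]]. -/
def Jmat (m : ℕ) : Matrix (Fin (2 * m)) (Fin (2 * m)) ℂ :=
  Matrix.of fun i j =>
    if (i : ℕ) = (j : ℕ) + 1 ∧ (j : ℕ) % 2 = 0 then 1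
    else if (j : ℕ) = (i : ℕ) + 1 ∧ (i : ℕ) % 2 = 0 then -1 else 0

open Matrix in
lemma mulJ_apply (m : ℕ) (M : Matrix (Fin (2 * m)) (Fin (2 * m)) ℂ)
    (i j : Fin (2 * m)) :
    (M * Jmat m) i j =
      if h : (j : ℕ) % 2 = 0 then M i ⟨(j : ℕ) + 1, by omega⟩
      else -(M i ⟨(j : ℕ) - 1, by omega⟩) := by
  rw [Matrix.mul_apply]
  split_ifs with h
  · rw [Finset.sum_eq_single (⟨(j : ℕ) + 1, by omega⟩ : Fin (2 * m))]
    · simp [Jmat, h]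
    · intro l _ hl
      have hlv : (l : ℕ) ≠ (j : ℕ) + 1 := fun hc => hl (by ext; simp [hc])
      simp only [Jmat, of_apply]
      rw [if_neg (by tauto), if_neg (by omega)]
      ring
    · simp
  · rw [Finset.sum_eq_single (⟨(j : ℕ) - 1, by omega⟩ : Fin (2 * m))]
    · simp only [Jmat, of_apply]
      split_ifs <;> first | omega | (exfalso; omega) | ring1 | (exfalso; simp only [true_and, not_true] at *; omega)
    · intro l _ hl
      have hlv : (l : ℕ) ≠ (j : ℕ) - 1 := fun hc => hl (by ext; simp [hc])
      simp only [Jmat, of_apply]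
      rw [if_neg (by omega), if_neg (by omega)]
      ring
    · simp

open Matrix in
lemma Jmul_apply (m : ℕ) (M : Matrix (Fin (2 * m)) (Fin (2 * m)) ℂ)
    (i j : Fin (2 * m)) :
    (Jmat m * M) i j =
      if h : (i : ℕ) % 2 = 0 then -(M ⟨(i : ℕ) + 1, by omega⟩ j)
      else M ⟨(i : ℕ) - 1, by omega⟩ j := by
  rw [Matrix.mul_apply]
  split_ifs with h
  · rw [Finset.sum_eq_single (⟨(i : ℕ) + 1, by omega⟩ : Fin (2 * m))]
    · simp only [Jmat, of_apply]
      split_ifs <;> first | omega | (exfalso; omega) | ring1 | (exfalso; simp only [true_and, not_true] at *; omega)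
    · intro l _ hl
      have hlv : (l : ℕ) ≠ (i : ℕ) + 1 := fun hc => hl (by ext; simp [hc])
      simp only [Jmat, of_apply]
      rw [if_neg (by omega), if_neg (by tauto)]
      ring
    · simp
  · rw [Finset.sum_eq_single (⟨(i : ℕ) - 1, by omega⟩ : Fin (2 * m))]
    · simp only [Jmat, of_apply]
      split_ifs <;> first | omega | (exfalso; omega) | ring1 | (exfalso; simp only [true_and, not_true] at *; omega)
    · intro l _ hl
      have hlv : (l : ℕ) ≠ (i : ℕ) - 1 := fun hc => hl (by ext; simp [hc])
      simp only [Jmat, of_apply]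
      rw [if_neg (by omega), if_neg (by omega)]
      ring
    · simp

open Matrix in
lemma Jmat_sq (m : ℕ) : Jmat m * Jmat m = -1 := by
  ext i j
  rw [Jmul_apply]
  have hone : (-1 : Matrix (Fin (2*m)) (Fin (2*m)) ℂ) i j
      = if (i : ℕ) = (j : ℕ) then -1 else 0 := by
    by_cases hij : (i : ℕ) = (j : ℕ)
    · rw [if_pos hij, Fin.ext hij]; simp
    · rw [if_neg hij]
      simp [Matrix.one_apply_ne (fun hc => hij (congrArg Fin.val hc))]
  rw [hone]
  simp only [Jmat, of_apply]
  split_ifs <;> first | omega | (exfalso; omega) | norm_num | (exfalso; simp only [true_and, not_true] at *; omega)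

open Matrix in
lemma Jmat_star (m : ℕ) (i j : Fin (2 * m)) : star (Jmat m i j) = Jmat m i j := by
  simp only [Jmat, of_apply]
  split_ifs <;> simp

theorem sp_iff_columns (m : ℕ) (A : Matrix (Fin (2 * m)) (Fin (2 * m)) ℂ)
    (hA : A ∈ Matrix.specialUnitaryGroup (Fin (2 * m)) ℂ) :
    A.transpose * Jmat m * A = Jmat m ↔
      ∀ k : Fin m,
        (fun i => A i ⟨2 * (k : ℕ) + 1, by omega⟩) =
          (Jmat m).mulVec (fun i => star (A i ⟨2 * (k : ℕ), by omega⟩)) := by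
  classical
  set J := Jmat m with hJ
  set B : Matrix (Fin (2 * m)) (Fin (2 * m)) ℂ := A.map star with hB
  have hU : A ∈ Matrix.unitaryGroup (Fin (2 * m)) ℂ :=
    ((Matrix.mem_specialUnitaryGroup_iff).mp hA).1
  have h1 : star A * A = 1 := (Matrix.mem_unitaryGroup_iff').mp hU
  have h2 : A * star A = 1 := (Matrix.mem_unitaryGroup_iff).mp hU
  have hstar : star A = B.transpose := by
    ext i j
    simp [hB, Matrix.star_apply, Matrix.map_apply]
  rw [hstar] at h1 h2
  have hAB : A.transpose * B = 1 := by
    have := congrArg Matrix.transpose h1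
    simpa [Matrix.transpose_mul] using this
  have hBA : B * A.transpose = 1 := by
    have := congrArg Matrix.transpose h2
    simpa [Matrix.transpose_mul] using this
  -- step 1 : AᵀJA = J ↔ J*B = A*J
  have step1 : A.transpose * J * A = J ↔ J * A = B * J := by
    constructor
    · intro h
      calc J * A = (B * A.transpose) * (J * A) := by rw [hBA, one_mul]
        _ = B * (A.transpose * J * A) := by noncomm_ring
        _ = B * J := by rw [h]
    · intro h
      calc A.transpose * J * A = A.transpose * (J * A) := by rw [mul_assoc]
        _ = A.transpose * (B * J) := by rw [h]
        _ = (A.transpose * B) * J := by rw [mul_assoc]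
        _ = J := by rw [hAB, one_mul]
  have starmul : ∀ M N : Matrix (Fin (2 * m)) (Fin (2 * m)) ℂ,
      (M * N).map (starRingEnd ℂ) = M.map (starRingEnd ℂ) * N.map (starRingEnd ℂ) := by
    intro M N
    ext i j
    simp [Matrix.mul_apply, Matrix.map_apply, map_sum]
  have hJmap : J.map (starRingEnd ℂ) = J := by
    ext i j
    simpa using Jmat_star m i j
  have hAmap : A.map (starRingEnd ℂ) = B := by
    ext i j; simp [hB, Matrix.map_apply]
  have hBmap : B.map (starRingEnd ℂ) = A := by
    ext i j; simp [hB, Matrix.map_apply]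
  have step2 : J * A = B * J ↔ J * B = A * J := by
    constructor
    · intro h
      have := congrArg (fun M : Matrix (Fin (2*m)) (Fin (2*m)) ℂ => M.map (starRingEnd ℂ)) h
      rwa [starmul, starmul, hJmap, hAmap, hBmap] at this
    · intro h
      have := congrArg (fun M : Matrix (Fin (2*m)) (Fin (2*m)) ℂ => M.map (starRingEnd ℂ)) h
      rwa [starmul, starmul, hJmap, hAmap, hBmap] at this
  rw [step1, step2]
  -- step 3 : J*B = A*J ↔ column condition
  constructor
  · intro h k
    funext i
    have e1 : (A * J) i ⟨2 * (k : ℕ), by omega⟩ = A i ⟨2 * (k : ℕ) + 1, by omega⟩ := by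
      rw [mulJ_apply, dif_pos (show ((⟨2 * (k : ℕ), by omega⟩ : Fin (2*m)) : ℕ) % 2 = 0 by simp)]
    have e2 : (J * B) i ⟨2 * (k : ℕ), by omega⟩ =
        J.mulVec (fun l => star (A l ⟨2 * (k : ℕ), by omega⟩)) i := by
      simp [Matrix.mul_apply, Matrix.mulVec, dotProduct, hB, Matrix.map_apply]
    rw [← e2, h, e1]
  · intro h
    -- column form of the hypothesis
    have hcol : ∀ k : Fin m, ∀ i, A i ⟨2 * (k : ℕ) + 1, by omega⟩ =
        (J * B) i ⟨2 * (k : ℕ), by omega⟩ := by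
      intro k i
      have := congrFun (h k) i
      rw [this]
      simp [Matrix.mul_apply, Matrix.mulVec, dotProduct, hB, Matrix.map_apply]
    -- B's odd columns: B l (2k+1) = (J * A) l (2k)
    have hBcol : ∀ k : Fin m, ∀ l, B l ⟨2 * (k : ℕ) + 1, by omega⟩ =
        (J * A) l ⟨2 * (k : ℕ), by omega⟩ := by
      intro k l
      have := hcol k l
      simp only [hB, Matrix.map_apply]
      rw [this]
      simp only [Matrix.mul_apply, star_sum, star_mul']
      refine Finset.sum_congr rfl fun s _ => ?_
      rw [Jmat_star, hB, Matrix.map_apply, star_star]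
  -- now prove matrix equality
    ext i j
    rcases Nat.even_or_odd (j : ℕ) with hj | hj
    · obtain ⟨k0, hk0⟩ := hj
      obtain ⟨k, hk⟩ : ∃ k : ℕ, (j : ℕ) = 2 * k := ⟨k0, by omega⟩
      have hkm : k < m := by omega
      have e1 : (A * J) i j = A i ⟨(j : ℕ) + 1, by omega⟩ := by
        rw [mulJ_apply, dif_pos (by omega)]
      rw [e1]
      have := hcol ⟨k, hkm⟩ i
      simp only at this
      have hj1 : (⟨2 * k + 1, by omega⟩ : Fin (2 * m)) = ⟨(j : ℕ) + 1, by omega⟩ := by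
        ext; simp [hk]
      have hj0 : (⟨2 * k, by omega⟩ : Fin (2 * m)) = j := by ext; simp [hk]
      rw [hj1, hj0] at this
      rw [this]
    · obtain ⟨k0, hk0⟩ := hj
      obtain ⟨k, hk⟩ : ∃ k : ℕ, (j : ℕ) = 2 * k + 1 := ⟨k0, by omega⟩
      have hkm : k < m := by omega
      have e1 : (A * J) i j = -(A i ⟨2 * k, by omega⟩) := by
        rw [mulJ_apply, dif_neg (by omega)]
        congr 2
        ext; simp [hk]
      -- (J*B) i j = Σ_l J i l * B l j = Σ_l J i l * (J*A) l (2k) = (J*J*A) i 2k = -A i 2k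
      have e2 : (J * B) i j = (J * (J * A)) i ⟨2 * k, by omega⟩ := by
        simp only [Matrix.mul_apply]
        refine Finset.sum_congr rfl fun l _ => ?_
        congr 1
        have := hBcol ⟨k, hkm⟩ l
        simp only at this
        have hjj : (⟨2 * k + 1, by omega⟩ : Fin (2 * m)) = j := by ext; simp [hk]
        rw [hjj] at this
        rw [this, Matrix.mul_apply]
      rw [e1, e2, ← mul_assoc, Jmat_sq]
      simp
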